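/- In the combinatorial model of the cluster tube: an indecomposable (a,b) is rigid (E((a,b),(a,b)) = 0) if and only if b ≤ n-1. -/
import Mathlib


/-- The dimension of `Hom_{T_n}((a,b),(c,d))` in the tube of rank `n`, given by the
classical counting formula: the number of integers `t` with
`max(0, b-d) ≤ t ≤ b-1` and `t ≡ c - a (mod n)`. -/
noncomputable def dimHomTube (n : ℕ) (a : ℤ) (b : ℕ) (c : ℤ) (d : ℕ) : ℕ :=
  Nat.card {t : ℤ // 0 ≤ t ∧ t ≤ (b : ℤ) - 1 ∧ (b : ℤ) - (d : ℤ) ≤ t ∧ (n : ℤ) ∣ (c - a - t)}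

/-- The combinatorial `dim Ext¹` in the cluster tube of rank `n`:
`E((a,b),(c,d)) = dim Hom((c,d), τ(a,b)) + dim Hom((a,b), τ(c,d))`,
where `τ(a,b) = (a-1,b)`. -/
noncomputable def EDim (n : ℕ) (a : ℤ) (b : ℕ) (c : ℤ) (d : ℕ) : ℕ :=
  dimHomTube n c d (a - 1) b + dimHomTube n a b (c - 1) d

lemma aux18 (n : ℕ) (hn : 2 ≤ n) (a : ℤ) (b : ℕ) (hb : 1 ≤ b) :
    dimHomTube n a b (a - 1) b = 0 ↔ b ≤ n - 1 := by
  unfold dimHomTube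
  constructor
  · intro h
    by_contra hc
    have hnb : (n : ℤ) ≤ (b : ℤ) := by omega
    have hfin : {t : ℤ | 0 ≤ t ∧ t ≤ (b : ℤ) - 1 ∧ (b : ℤ) - (b : ℤ) ≤ t ∧
        (n : ℤ) ∣ (a - 1 - a - t)}.Finite :=
      (Set.finite_Icc 0 ((b : ℤ) - 1)).subset (fun t ht => ⟨ht.1, ht.2.1⟩)
    haveI : Finite {t : ℤ // 0 ≤ t ∧ t ≤ (b : ℤ) - 1 ∧ (b : ℤ) - (b : ℤ) ≤ t ∧
        (n : ℤ) ∣ (a - 1 - a - t)} := hfin.to_subtype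
    have hne : Nonempty {t : ℤ // 0 ≤ t ∧ t ≤ (b : ℤ) - 1 ∧ (b : ℤ) - (b : ℤ) ≤ t ∧
        (n : ℤ) ∣ (a - 1 - a - t)} :=
      ⟨⟨(n : ℤ) - 1, by omega, by omega, by omega, ⟨-1, by ring⟩⟩⟩
    have hpos := Nat.card_pos (α := {t : ℤ // 0 ≤ t ∧ t ≤ (b : ℤ) - 1 ∧
        (b : ℤ) - (b : ℤ) ≤ t ∧ (n : ℤ) ∣ (a - 1 - a - t)})
    omega
  · intro h
    rw [Nat.card_eq_zero]
    left
    refine ⟨?_⟩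
    rintro ⟨t, h0, h1, _, hd⟩
    have heq : a - 1 - a - t = -(1 + t) := by ring
    rw [heq, dvd_neg] at hd
    have := Int.le_of_dvd (by omega) hd
    omega

/-- An indecomposable `(a,b)` of the cluster tube of rank `n` is rigid (i.e. has no
self-extensions, `E((a,b),(a,b)) = 0`) if and only if `b ≤ n - 1`. -/
theorem stmt_18 (n : ℕ) (hn : 2 ≤ n) (a : ℤ) (b : ℕ) (hb : 1 ≤ b) :
    EDim n a b a b = 0 ↔ b ≤ n - 1 := by
  unfold EDim
  rw [Nat.add_eq_zero, and_self, aux18 n hn a b hb]
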